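/- (The equality case of the unified relation R_d.) For every natural number d and all ZF sets r and s: there exists m such that for all k, (k = ι^[d] r or k = ι^[d] s) implies m ∈^d k, if and only if r = s. -/
import Mathlib

/-- The singleton operator on ZF sets. -/
def ι (x : ZFSet) : ZFSet := {x}

/-- Iterated membership: `iterMem d m k` says `m ∈^d k`. -/
def iterMem : ℕ → ZFSet → ZFSet → Prop
  | 0, m, k => m = k
  | d + 1, m, k => ∃ k' : ZFSet, k' ∈ k ∧ iterMem d m k'

lemma iterMem_iter (d : ℕ) (m r : ZFSet) : iterMem d m (ι^[d] r) ↔ m = r := by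
  induction d with
  | zero => simp [iterMem]
  | succ d ih =>
      rw [Function.iterate_succ_apply']
      constructor
      · rintro ⟨k', hk', h⟩
        rw [show (ι (ι^[d] r)) = ({ι^[d] r} : ZFSet) from rfl, ZFSet.mem_singleton] at hk'
        subst hk'; exact ih.mp h
      · intro h
        exact ⟨ι^[d] r, ZFSet.mem_singleton.mpr rfl, ih.mpr h⟩

theorem unified_relation_eq (d : ℕ) (r s : ZFSet) :
    (∃ m : ZFSet, ∀ k : ZFSet,
        (k = ι^[d] r ∨ k = ι^[d] s) → iterMem d m k) ↔ r = s := by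
  constructor
  · rintro ⟨m, hm⟩
    have hr := (iterMem_iter d m r).mp (hm _ (Or.inl rfl))
    have hs := (iterMem_iter d m s).mp (hm _ (Or.inr rfl))
    exact hr ▸ hs
  · rintro rfl
    exact ⟨r, by rintro k (rfl | rfl) <;> exact (iterMem_iter d r r).mpr rfl⟩
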